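/- Let μ be a strong limit cardinal of cofinality ℵ₀. Then the following are equivalent: (A) there is a universal locally finite group of cardinality μ; (B) for every ℵ₀-indecomposable locally finite group H of cardinality < μ there exist an index set I of cardinality ≤ μ and a family ⟨G_α : α ∈ I⟩ of locally finite groups of cardinality μ, each containing H as a subgroup, such that every locally finite group G of cardinality μ containing H embeds into some G_α over H. -/

import Mathlib

universe u
open Cardinal

/-- A group is locally finite if every finitely generated subgroup is finite. -/
def LocallyFiniteGroup (G : Type u) [Group G] : Prop :=
  ∀ s : Finset G, Set.Finite ((Subgroup.closure (s : Set G) : Subgroup G) : Set G)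

/-- A group `G` is `θ`-indecomposable when every `⊆`-increasing sequence
`⟨M_i : i < θ⟩` of subgroups of `G` with union `G` contains `G` as a member. -/
def GroupIndecomp (θ : Cardinal.{u}) (G : Type u) [Group G] : Prop :=
  ∀ M : θ.ord.ToType → Subgroup G, Monotone M → (⨆ i, M i) = ⊤ → ∃ i, M i = ⊤

/-- `G` is a universal locally finite group of cardinality `μ`. -/
def UniversalLF (μ : Cardinal.{u}) (G : Type u) [Group G] : Prop :=
  LocallyFiniteGroup G ∧ #G = μ ∧
    ∀ (H : Type u) (_ : Group H), LocallyFiniteGroup H → #H = μ →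
      ∃ f : H →* G, Function.Injective f


/-!
(A) ⇒ (B): as `cf μ = ℵ₀`, a universal group `U` is the union of a chain `U₀ ≤ U₁ ≤ ⋯` of
subgroups of size `< μ` (local finiteness keeps a subgroup generated by fewer than `μ` elements
below `μ`, also when `μ = ℵ₀`). An `ℵ₀`-indecomposable `H` embeds into `U` only inside some `Uₙ`,
so there are at most `∑ₙ |Uₙ| ^ |H| ≤ μ` such embeddings (`μ` is a strong limit), and the copies
of `U` indexed by them form the required family.

(B) ⇒ (A): the trivial group is `ℵ₀`-indecomposable, and the restricted direct product of the
family it yields is a locally finite group of size `μ` into which every member embeds.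
-/

open Set Function

namespace Cardinal

theorem exists_monotone_iUnion_eq_univ_of_cof_eq_aleph0 {μ : Cardinal.{u}}
    (hcof : μ.ord.cof = ℵ₀) {α : Type u} (hα : #α = μ) :
    ∃ s : ℕ → Set α, Monotone s ∧ ⋃ n, s n = Set.univ ∧ ∀ n, #(s n) < μ := by
  obtain ⟨f, hf⟩ := Ordinal.exists_isFundamentalSeq (o := μ.ord) (a := Ordinal.omega0)
    (by rw [hcof, ord_aleph0])
  let v : ℕ → μ.ord.ToType := fun n => Ordinal.ToType.mk (f ⟨n, Ordinal.natCast_lt_omega0 n⟩)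
  have hv : StrictMono v := fun m n hmn =>
    Ordinal.ToType.mk.strictMono (hf.strictMono (Subtype.mk_lt_mk.2 (by exact_mod_cast hmn)))
  obtain ⟨e⟩ := Cardinal.eq.1 (hα.trans (mk_ord_toType μ).symm)
  refine ⟨fun n => e ⁻¹' Iio (v n),
    fun m n hmn => preimage_mono (Iio_subset_Iio (hv.monotone hmn)),
    eq_univ_of_forall fun x => ?_, fun n => ?_⟩
  · obtain ⟨_, ⟨i, rfl⟩, hi⟩ := hf.isCofinal_range (Ordinal.ToType.mk.symm (e x))
    obtain ⟨n, hn⟩ := Ordinal.lt_omega0.1 i.2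
    have hle : e x ≤ v n := by
      rw [← OrderIso.symm_apply_le]
      convert hi
      exact Subtype.ext hn.symm
    exact mem_iUnion.2 ⟨n + 1, hle.trans_lt (hv n.lt_succ_self)⟩
  · rw [mk_preimage_equiv]
    simpa using mk_Iio_lt (v n) (by rw [mk_ord_toType, Ordinal.type_toType])

universe v in
theorem mk_iUnion_le_of_le {α : Type u} {ι : Type v} {s : ι → Set α} {c : Cardinal.{u}}
    (hc : ℵ₀ ≤ c) (hι : lift.{u} #ι ≤ lift.{v} c) (hs : ∀ i, #(s i) ≤ c) : #(⋃ i, s i) ≤ c := by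
  rw [← lift_le.{v}]
  refine (mk_iUnion_le_lift s).trans <|
    (mul_le_mul' hι (ciSup_le' fun i => lift_le.2 (hs i))).trans_eq ?_
  rw [mul_eq_self (aleph0_le_lift.2 hc)]

theorem IsStrongLimit.power_lt {μ a b : Cardinal.{u}} (hμ : μ.IsStrongLimit) (ha : a < μ)
    (hb : b < μ) : a ^ b < μ := by
  rcases lt_or_ge (max a b) ℵ₀ with hfin | hinf
  · exact (power_lt_aleph0 ((le_max_left a b).trans_lt hfin)
      ((le_max_right a b).trans_lt hfin)).trans_le hμ.aleph0_le
  · calc a ^ b ≤ (2 ^ max a b) ^ max a b :=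
          (power_le_power_right ((le_max_left a b).trans (cantor _).le)).trans
            (power_le_power_left (power_ne_zero _ two_ne_zero) (le_max_right a b))
      _ = 2 ^ max a b := by rw [← power_mul, mul_eq_self hinf]
      _ < μ := hμ.isStrongPrelimit (max_lt ha hb)

end Cardinal

theorem Subgroup.cardinalMk_closure_le_max {G : Type u} [Group G] (s : Set G) :
    #(closure s) ≤ max #s ℵ₀ := by
  rcases s.eq_empty_or_nonempty with rfl | ⟨x, hx⟩
  · rw [closure_empty]
    exact (lt_aleph0_of_finite _).le.trans (le_max_right _ _)
  · have : Nonempty s := ⟨⟨x, hx⟩⟩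
    rw [FreeGroup.closure_eq_range, ← mk_freeGroup]
    exact mk_le_of_surjective (FreeGroup.lift _).rangeRestrict_surjective

namespace LocallyFiniteGroup

theorem of_finite {G : Type u} [Group G] [Finite G] : LocallyFiniteGroup G :=
  fun _ => toFinite _

theorem pi {ι : Type u} [Finite ι] {G : ι → Type u} [∀ i, Group (G i)]
    (h : ∀ i, LocallyFiniteGroup (G i)) : LocallyFiniteGroup (∀ i, G i) := by
  classical
  intro s
  have hle : Subgroup.closure (s : Set (∀ i, G i)) ≤
      Subgroup.pi univ fun i => Subgroup.closure (↑(s.image fun f => f i) : Set (G i)) :=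
    (Subgroup.closure_le _).2 fun f hf i _ =>
      Subgroup.subset_closure (by simpa using ⟨f, hf, rfl⟩)
  refine Finite.subset ?_ hle
  rw [Subgroup.coe_pi]
  exact Finite.pi fun i => h i _

theorem cardinalMk_closure_lt {G : Type u} [Group G] (hG : LocallyFiniteGroup G)
    {μ : Cardinal.{u}} (hμ : ℵ₀ ≤ μ) {s : Set G} (hs : #s < μ) : #(Subgroup.closure s) < μ := by
  rcases lt_or_ge #s ℵ₀ with hfin | hinf
  · lift s to Finset G using lt_aleph0_iff_set_finite.1 hfin
    have := (hG s).to_subtype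
    exact (lt_aleph0_of_finite _).trans_le hμ
  · exact (Subgroup.cardinalMk_closure_le_max s).trans_lt (by rwa [max_eq_left hinf])

theorem exists_monotone_iSup_eq_top {G : Type u} [Group G] (hG : LocallyFiniteGroup G)
    {μ : Cardinal.{u}} (hcof : μ.ord.cof = ℵ₀) (hGμ : #G = μ) :
    ∃ K : ℕ → Subgroup G, Monotone K ∧ ⨆ n, K n = ⊤ ∧ ∀ n, #(K n) < μ := by
  have hμ : ℵ₀ ≤ μ := hcof ▸ (Ordinal.cof_le_card _).trans (card_ord μ).le
  obtain ⟨s, hs_mono, hs_cover, hs_card⟩ :=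
    exists_monotone_iUnion_eq_univ_of_cof_eq_aleph0 hcof hGμ
  refine ⟨fun n => Subgroup.closure (s n), fun m n hmn => Subgroup.closure_mono (hs_mono hmn),
    ?_, fun n => hG.cardinalMk_closure_lt hμ (hs_card n)⟩
  rw [← Subgroup.closure_iUnion, hs_cover, Subgroup.closure_univ]

end LocallyFiniteGroup

namespace GroupIndecomp

variable {H : Type u} [Group H]

theorem exists_eq_top_of_monotone (hH : GroupIndecomp ℵ₀ H) {M : ℕ → Subgroup H}
    (hM : Monotone M) (htop : ⨆ n, M n = ⊤) : ∃ n, M n = ⊤ := by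
  let e : ℕ ≃o (ℵ₀ : Cardinal.{u}).ord.ToType := ULift.orderIso.{u}.symm.trans
    (OrderIso.ofRelIsoLT (Nonempty.some (by simp [← Ordinal.type_eq])))
  obtain ⟨i, hi⟩ := hH (M ∘ e.symm) (hM.comp e.symm.monotone)
    ((e.symm.surjective.iSup_comp M).trans htop)
  exact ⟨e.symm i, hi⟩

theorem exists_range_le (hH : GroupIndecomp ℵ₀ H) {G : Type u} [Group G]
    {K : ℕ → Subgroup G} (hK : Monotone K) (htop : ⨆ n, K n = ⊤) (f : H →* G) :
    ∃ n, f.range ≤ K n := by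
  have hcomap : ⨆ n, (K n).comap f = ⊤ := eq_top_iff.2 fun h _ => by
    obtain ⟨n, hn⟩ := (Subgroup.mem_iSup_of_directed hK.directed_le).1
      (htop ▸ Subgroup.mem_top (f h) : f h ∈ ⨆ n, K n)
    exact Subgroup.mem_iSup_of_mem n hn
  obtain ⟨n, hn⟩ :=
    hH.exists_eq_top_of_monotone (fun _ _ h => Subgroup.comap_mono (hK h)) hcomap
  exact ⟨n, by rw [f.range_eq_map, Subgroup.map_le_iff_le_comap, hn]⟩

theorem of_subsingleton {θ : Cardinal.{u}} (hθ : θ ≠ 0) [Subsingleton H] : GroupIndecomp θ H :=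
  fun _ _ _ =>
    have : Nonempty θ.ord.ToType := Ordinal.nonempty_toType_iff.2 (ord_eq_zero.not.2 hθ)
    ⟨Classical.arbitrary _, Subsingleton.elim _ _⟩

end GroupIndecomp

namespace Subgroup

variable {ι : Type u} (G : ι → Type u) [∀ i, Group (G i)]

def restrictedPi : Subgroup (∀ i, G i) where
  carrier := {f | {i | f i ≠ 1}.Finite}
  one_mem' := by simp
  mul_mem' {f g} hf hg := (hf.union hg).subset fun i (hi : f i * g i ≠ 1) => by
    by_contra h
    obtain ⟨hfi, hgi⟩ := not_or.1 h
    exact hi (by rw [not_not.1 hfi, not_not.1 hgi, mul_one])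
  inv_mem' hf := by simpa using hf

def mulSingleRestrictedPi [DecidableEq ι] (i : ι) : G i →* restrictedPi G :=
  (MonoidHom.mulSingle G i).codRestrict _ fun _ =>
    (finite_singleton i).subset fun _ hj =>
      by_contra fun hji => hj (Pi.mulSingle_eq_of_ne hji _)

@[simp]
theorem coe_mulSingleRestrictedPi [DecidableEq ι] (i : ι) (x : G i) :
    (mulSingleRestrictedPi G i x : ∀ i, G i) = Pi.mulSingle i x :=
  rfl

theorem mulSingleRestrictedPi_injective [DecidableEq ι] (i : ι) :
    Injective (mulSingleRestrictedPi G i) :=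
  fun _ _ h => Pi.mulSingle_injective i (congrArg Subtype.val h)

variable {G}

theorem mk_restrictedPi_le {μ : Cardinal.{u}} (hμ : ℵ₀ ≤ μ) (hι : #ι ≤ μ)
    (hG : ∀ i, #(G i) ≤ μ) : #(restrictedPi G) ≤ μ := by
  classical
  have hcover : (restrictedPi G : Set (∀ i, G i)) ⊆ ⋃ T : Finset ι, {f | ∀ i ∉ T, f i = 1} :=
    fun f hf => mem_iUnion.2
      ⟨hf.toFinset, fun i hi => by_contra fun h => hi (hf.mem_toFinset.2 h)⟩
  have hpiece (T : Finset ι) : #{f : ∀ i, G i | ∀ i ∉ T, f i = 1} ≤ μ := by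
    have hrestrict :
        Injective fun f : {f : ∀ i, G i | ∀ i ∉ T, f i = 1} => fun i : T => f.1 i := by
      intro f g hfg
      ext i
      by_cases hi : i ∈ T
      · exact congrFun hfg ⟨i, hi⟩
      · rw [f.2 i hi, g.2 i hi]
    calc _ ≤ #(∀ i : T, G i) := mk_le_of_injective hrestrict
      _ ≤ μ ^ #T := by
          rw [mk_pi]
          exact (prod_le_prod _ _ fun i : T => hG i).trans (prod_const' _ _).le
      _ ≤ μ := by
          rw [mk_coe_finset]
          exact power_nat_le hμ
  have hfinset : #(Finset ι) ≤ μ := by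
    rcases finite_or_infinite ι with _ | _
    · exact (lt_aleph0_of_finite _).le.trans hμ
    · rwa [mk_finset_of_infinite]
  exact (mk_le_mk_of_subset hcover).trans
    (mk_iUnion_le_of_le hμ (by simpa using hfinset) hpiece)

end Subgroup

theorem LocallyFiniteGroup.restrictedPi {ι : Type u} {G : ι → Type u} [∀ i, Group (G i)]
    (h : ∀ i, LocallyFiniteGroup (G i)) : LocallyFiniteGroup (Subgroup.restrictedPi G) := by
  classical
  intro s
  set T : Set ι := ⋃ f ∈ s, {i | (f : ∀ i, G i) i ≠ 1}
  have : Finite T := (s.finite_toSet.biUnion fun f _ => f.2).to_subtype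
  let π : Subgroup.restrictedPi G →* ∀ i : T, G i :=
    MonoidHom.pi fun i => (Pi.evalMonoidHom G i).comp (Subgroup.restrictedPi G).subtype
  have hsupp : ∀ f ∈ Subgroup.closure (s : Set (Subgroup.restrictedPi G)), ∀ i ∉ T,
      (f : ∀ i, G i) i = 1 := by
    intro f hf
    have hle : Subgroup.closure (s : Set (Subgroup.restrictedPi G)) ≤
        (Subgroup.pi Tᶜ fun _ => ⊥).comap (Subgroup.restrictedPi G).subtype :=
      (Subgroup.closure_le _).2 fun g hg i hi =>
        Subgroup.mem_bot.2 (by_contra fun hgi => hi (mem_biUnion hg hgi))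
    exact fun i hi =>
      Subgroup.mem_bot.1 ((Subgroup.mem_pi _).1 (Subgroup.mem_comap.1 (hle hf)) i hi)
  have hinj : InjOn π (Subgroup.closure (s : Set (Subgroup.restrictedPi G))) :=
    fun f hf g hg hfg => Subtype.ext <| funext fun i => by
      by_cases hi : i ∈ T
      · exact congrFun hfg ⟨i, hi⟩
      · rw [hsupp f hf i hi, hsupp g hg i hi]
  refine Finite.of_finite_image ?_ hinj
  rw [← Subgroup.coe_map, MonoidHom.map_closure, ← Finset.coe_image]
  exact pi (fun i : T => h i) _

theorem exists_locallyFiniteGroup_mk_eq {μ : Cardinal.{u}} (hμ : ℵ₀ ≤ μ) :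
    ∃ (W : Type u) (_ : Group W), LocallyFiniteGroup W ∧ #W = μ := by
  classical
  let C := ULift.{u} (Multiplicative (ZMod 2))
  obtain ⟨c, hc⟩ := exists_ne (1 : C)
  refine ⟨Subgroup.restrictedPi fun _ : μ.out => C, inferInstance,
    LocallyFiniteGroup.restrictedPi fun _ => .of_finite,
    le_antisymm (Subgroup.mk_restrictedPi_le hμ (mk_out μ).le
      fun _ => (lt_aleph0_of_finite C).le.trans hμ) ?_⟩
  conv_lhs => rw [← mk_out μ]
  refine mk_le_of_injective (f := fun i => Subgroup.mulSingleRestrictedPi _ i c) fun i j hij => ?_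
  by_contra hne
  have := congrArg (fun f : Subgroup.restrictedPi fun _ => C => (f : ∀ _, C) i) hij
  simp [Pi.mulSingle_eq_of_ne hne, hc] at this

def HasUniversalFamilyOver (μ : Cardinal.{u}) (H : Type u) [Group H] : Prop :=
  ∃ (I : Type u), #I ≤ μ ∧
    ∃ (Gf : I → Type u) (_ : ∀ α, Group (Gf α)) (e : ∀ α, H →* Gf α),
      (∀ α, LocallyFiniteGroup (Gf α) ∧ #(Gf α) = μ ∧ Injective (e α)) ∧
      ∀ (G : Type u) (_ : Group G), LocallyFiniteGroup G → #G = μ →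
        ∀ eG : H →* G, Injective eG →
          ∃ α, ∃ f : G →* Gf α, Injective f ∧ f.comp eG = e α

theorem mk_setOf_range_le_le {H G : Type u} [Group H] [Group G] {μ : Cardinal.{u}}
    (hμ : μ.IsStrongLimit) (hH : #H < μ) {K : ℕ → Subgroup G} (hK : ∀ n, #(K n) < μ) :
    #{j : H →* G | ∃ n, j.range ≤ K n} ≤ μ := by
  rw [ofPred_exists]
  refine mk_iUnion_le_of_le hμ.aleph0_le (by simpa using hμ.aleph0_le) fun n => ?_
  calc #{j : H →* G | j.range ≤ K n} ≤ #(H → K n) :=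
        mk_le_of_injective (f := fun j h => ⟨j.1 h, j.2 ⟨h, rfl⟩⟩) fun j k hjk =>
          Subtype.ext <| DFunLike.ext _ _ fun h => congrArg Subtype.val (congrFun hjk h)
    _ = #(K n) ^ #H := (power_def _ _).symm
    _ ≤ μ := (hμ.power_lt (hK n) hH).le

theorem UniversalLF.hasUniversalFamilyOver {μ : Cardinal.{u}} {U : Type u} [Group U]
    (hU : UniversalLF μ U) (hμ : μ.IsStrongLimit) (hcof : μ.ord.cof = ℵ₀)
    {H : Type u} [Group H] (hH : GroupIndecomp ℵ₀ H) (hHμ : #H < μ) :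
    HasUniversalFamilyOver μ H := by
  obtain ⟨hULF, hUμ, hUuniv⟩ := hU
  obtain ⟨K, hK_mono, hK_top, hK_card⟩ := hULF.exists_monotone_iSup_eq_top hcof hUμ
  let I := {j : H →* U | Injective j ∧ ∃ n, j.range ≤ K n}
  refine ⟨I, (mk_le_mk_of_subset fun j hj => hj.2).trans (mk_setOf_range_le_le hμ hHμ hK_card),
    fun _ => U, fun _ => inferInstance, fun j => j.1, fun j => ⟨hULF, hUμ, j.2.1⟩, ?_⟩
  intro G _ hG hGμ eG heG
  obtain ⟨f, hf⟩ := hUuniv G _ hG hGμ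
  exact ⟨⟨f.comp eG, hf.comp heG, hH.exists_range_le hK_mono hK_top _⟩, f, hf, rfl⟩

theorem HasUniversalFamilyOver.exists_universalLF {μ : Cardinal.{u}}
    (h : HasUniversalFamilyOver μ PUnit) (hμ : ℵ₀ ≤ μ) :
    ∃ (U : Type u) (_ : Group U), UniversalLF μ U := by
  classical
  obtain ⟨I, hI, Gf, _, _, hGf, huniv⟩ := h
  have hembed (G : Type u) [Group G] (hG : LocallyFiniteGroup G) (hGμ : #G = μ) :
      ∃ α, ∃ f : G →* Gf α, Injective f :=
    have ⟨α, f, hf, _⟩ := huniv G _ hG hGμ 1 (injective_of_subsingleton _)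
    ⟨α, f, hf⟩
  obtain ⟨W, _, hW, hWμ⟩ := exists_locallyFiniteGroup_mk_eq hμ
  -- only to know that the family has a member, which bounds `#(restrictedPi Gf)` from below
  obtain ⟨α₀, -⟩ := hembed W hW hWμ
  refine ⟨Subgroup.restrictedPi Gf, inferInstance, .restrictedPi fun α => (hGf α).1,
    le_antisymm (Subgroup.mk_restrictedPi_le hμ hI fun α => (hGf α).2.1.le) ?_,
    fun G _ hG hGμ => ?_⟩
  · rw [← (hGf α₀).2.1]
    exact mk_le_of_injective (Subgroup.mulSingleRestrictedPi_injective Gf α₀)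
  · obtain ⟨α, f, hf⟩ := hembed G hG hGμ
    exact ⟨(Subgroup.mulSingleRestrictedPi Gf α).comp f,
      (Subgroup.mulSingleRestrictedPi_injective Gf α).comp hf⟩

/-- the equivalence (A) ⇔ (B) of Theorem 2.6 for locally finite groups.
For `μ` a strong limit cardinal of cofinality `ℵ₀`: there is a universal locally finite
group of cardinality `μ` iff for every `ℵ₀`-indecomposable locally finite group `H` of
cardinality `< μ` there is a family `⟨G_α : α ∈ I⟩`, `|I| ≤ μ`, of locally finite groups of
cardinality `μ` extending `H` such that every locally finite group of cardinality `μ`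
extending `H` embeds into some `G_α` over `H`. -/
theorem universal_iff_family (μ : Cardinal.{u})
    (hsl : μ.IsStrongLimit) (hcof : μ.ord.cof = ℵ₀) :
    (∃ (G : Type u) (_ : Group G), UniversalLF μ G) ↔
    (∀ (H : Type u) (_ : Group H), LocallyFiniteGroup H → GroupIndecomp ℵ₀ H → #H < μ →
      ∃ (I : Type u), #I ≤ μ ∧
        ∃ (Gf : I → Type u) (_ : ∀ α, Group (Gf α)) (e : ∀ α, H →* Gf α),
          (∀ α, LocallyFiniteGroup (Gf α) ∧ #(Gf α) = μ ∧ Function.Injective (e α)) ∧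
          ∀ (G : Type u) (_ : Group G), LocallyFiniteGroup G → #G = μ →
            ∀ eG : H →* G, Function.Injective eG →
              ∃ α, ∃ f : G →* Gf α, Function.Injective f ∧ f.comp eG = e α) := by
  constructor
  · rintro ⟨U, _, hU⟩ H _ - hH hHμ
    exact hU.hasUniversalFamilyOver hsl hcof hH hHμ
  · intro hfamily
    have hpunit : HasUniversalFamilyOver μ PUnit :=
      hfamily PUnit _ .of_finite (.of_subsingleton aleph0_ne_zero)
        ((lt_aleph0_of_finite _).trans_le hsl.aleph0_le)
    exact hpunit.exists_universalLF hsl.aleph0_le
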